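/- arXiv:2204.02018 — 8 statements merged into one kernel-verified Lean document; each statement's English description precedes it below -/
import Mathlib

section
/- Let G be an abelian group and X a finite symmetric subset of G containing 0 (i.e., 0 ∈ X and X = -X). If X + X + X = X + X, then the subgroup generated by X equals X + X. -/
open scoped Pointwise

theorem sum_eq_closure_of_tripling {G : Type*} [AddCommGroup G] (X : Set G)
    (hfin : X.Finite) (h0 : (0 : G) ∈ X) (hsym : X = -X)
    (h : X + X + X = X + X) :
    ((AddSubgroup.closure X : AddSubgroup G) : Set G) = X + X := by
  have hXsub : X ⊆ X + X := fun x hx => ⟨x, hx, 0, h0, by simp⟩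
  have hadd : X + X + (X + X) = X + X := by
    rw [← add_assoc, h, h]
  have hneg : -(X + X) = X + X := by
    ext x
    simp only [Set.mem_neg, Set.mem_add]
    constructor
    · rintro ⟨a, ha, b, hb, hab⟩
      exact ⟨-a, by rw [hsym]; exact Set.neg_mem_neg.mpr ha,
             -b, by rw [hsym]; exact Set.neg_mem_neg.mpr hb,
             by rw [← neg_add, hab, neg_neg]⟩
    · rintro ⟨a, ha, b, hb, rfl⟩
      exact ⟨-a, by rw [hsym]; exact Set.neg_mem_neg.mpr ha,
             -b, by rw [hsym]; exact Set.neg_mem_neg.mpr hb,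
             by abel⟩
  let S : AddSubgroup G :=
    { carrier := X + X
      zero_mem' := hXsub h0
      add_mem' := fun {a b} ha hb => by
        have : a + b ∈ X + X + (X + X) := ⟨a, ha, b, hb, rfl⟩
        rwa [hadd] at this
      neg_mem' := fun {a} ha => by
        show -a ∈ X + X
        rw [← hneg]; exact Set.neg_mem_neg.mpr ha }
  apply le_antisymm
  · exact (AddSubgroup.closure_le S).mpr hXsub
  · rintro x ⟨a, ha, b, hb, rfl⟩
    exact add_mem (AddSubgroup.subset_closure ha) (AddSubgroup.subset_closure hb)
end

section
/- Let G be an abelian group and X a finite symmetric subset containing 0, with X + X + X ≠ X + X. Then |X + X| ≥ (3/2)|X|. -/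
open scoped Pointwise
open Finset

theorem doubling_ge_three_halves {G : Type*} [AddCommGroup G] [DecidableEq G]
    (X : Finset G) (h0 : (0 : G) ∈ X) (hsym : X = -X)
    (h : X + X + X ≠ X + X) :
    3 * X.card ≤ 2 * (X + X).card := by
  by_contra hlt
  push_neg at hlt
  -- for a, b ∈ X, the translates a +ᵥ X and b +ᵥ X overlap in more than half of X
  have key : ∀ a ∈ X, ∀ b ∈ X, X.card < 2 * ((a +ᵥ X) ∩ (b +ᵥ X)).card := by
    intro a ha b hb
    have hsub : (a +ᵥ X) ∪ (b +ᵥ X) ⊆ X + X := by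
      apply union_subset <;> intro x hx <;> rw [mem_vadd_finset] at hx <;>
        obtain ⟨y, hy, rfl⟩ := hx
      · exact add_mem_add ha hy
      · exact add_mem_add hb hy
    have h1 := card_inter_add_card_union (a +ᵥ X) (b +ᵥ X)
    rw [card_vadd_finset, card_vadd_finset] at h1
    have h2 := card_le_card hsub
    omega
  -- closure: sum of two elements of X + X is in X + X
  have closure : ∀ u ∈ X + X, ∀ v ∈ X + X, u + v ∈ X + X := by
    intro u hu v hv
    obtain ⟨a, ha, b, hb, rfl⟩ := mem_add.1 hu
    obtain ⟨c, hc, d, hd, rfl⟩ := mem_add.1 hv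
    have hnb : -b ∈ X := by rw [hsym]; simpa using hb
    have hnd : -d ∈ X := by rw [hsym]; simpa using hd
    set S1 : Finset G := X ∩ ((-(a + b)) +ᵥ X) with hS1
    set S2 : Finset G := X ∩ ((c + d) +ᵥ X) with hS2
    have e1 : a +ᵥ S1 = (a +ᵥ X) ∩ ((-b) +ᵥ X) := by
      rw [hS1, vadd_finset_inter, vadd_vadd]
      congr 2
      abel
    have e2 : (-c) +ᵥ S2 = ((-c) +ᵥ X) ∩ (d +ᵥ X) := by
      rw [hS2, vadd_finset_inter, vadd_vadd]
      congr 2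
      abel
    have hnc : -c ∈ X := by rw [hsym]; simpa using hc
    have c1 : X.card < 2 * S1.card := by
      have := key a ha (-b) hnb
      rwa [← e1, card_vadd_finset] at this
    have c2 : X.card < 2 * S2.card := by
      have := key (-c) hnc d hd
      rwa [← e2, card_vadd_finset] at this
    have hsub1 : S1 ⊆ X := inter_subset_left
    have hsub2 : S2 ⊆ X := inter_subset_left
    have hne : (S1 ∩ S2).Nonempty := by
      rw [← card_pos]
      have h1 := card_inter_add_card_union S1 S2
      have h2 := card_le_card (union_subset hsub1 hsub2)
      omega
    obtain ⟨x, hx⟩ := hne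
    rw [mem_inter, hS1, hS2, mem_inter, mem_inter] at hx
    obtain ⟨⟨hx1, hx2⟩, hx3, hx4⟩ := hx
    rw [mem_vadd_finset] at hx2 hx4
    obtain ⟨y, hy, hxy⟩ := hx2
    obtain ⟨z, hz, hxz⟩ := hx4
    -- x = -(a+b) + y = (c+d) + z, so (a+b) + (c+d) = y + (-z)
    have hnz : -z ∈ X := by rw [hsym]; simpa using hz
    have : a + b + (c + d) = y + (-z) := by
      simp only [vadd_eq_add] at hxy hxz
      have := hxy.trans hxz.symm
      -- -(a+b) + y = (c+d) + z
      have h' : y = (a + b) + ((c + d) + z) := by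
        rw [← this]; abel
      rw [h']; abel
    rw [this]
    exact add_mem_add hy hnz
  -- hence X + X + X = X + X, contradiction
  apply h
  apply Subset.antisymm
  · intro w hw
    obtain ⟨p, hp, x, hx, rfl⟩ := mem_add.1 hw
    have hx' : x + 0 ∈ X + X := add_mem_add hx h0
    have := closure p hp (x + 0) hx'
    simpa using this
  · intro w hw
    have : w + 0 ∈ X + X + X := add_mem_add hw h0
    simpa using this
end

section
/- Let 𝔤 be an algebra over a field K with bilinear bracket, and let X ⊆ 𝔤 be symmetric (finite, containing 0, X = -X). Define W_k = span_K(X^k), where X^k is the set of elements obtainable by combining k elements of X via + and [·,·]. If W_k = W_{k+1} = ... = W_{2k} for some k ≥ 1, then W_{k'} = W_k for all k' ≥ k. -/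
/-- `AlgPowB br X k z` means `z` can be written by combining `k` elements of `X`
via `+` and the bilinear bracket `br`; i.e. `z ∈ X^k`. -/
inductive AlgPowB {K : Type*} [Field K] {g : Type*} [AddCommGroup g] [Module K g]
    (br : g →ₗ[K] g →ₗ[K] g) (X : Set g) : ℕ → g → Prop
  | base {x : g} : x ∈ X → AlgPowB br X 1 x
  | add {j k : ℕ} {x y : g} : AlgPowB br X j x → AlgPowB br X k y →
      AlgPowB br X (j + k) (x + y)
  | node {j k : ℕ} {x y : g} : AlgPowB br X j x → AlgPowB br X k y →
      AlgPowB br X (j + k) (br x y)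

lemma AlgPowB.one_le {K : Type*} [Field K] {g : Type*} [AddCommGroup g] [Module K g]
    {br : g →ₗ[K] g →ₗ[K] g} {X : Set g} {j : ℕ} {x : g}
    (h : AlgPowB br X j x) : 1 ≤ j := by
  induction h <;> omega

lemma AlgPowB.pad {K : Type*} [Field K] {g : Type*} [AddCommGroup g] [Module K g]
    {br : g →ₗ[K] g →ₗ[K] g} {X : Set g} (h0 : (0 : g) ∈ X) {j : ℕ} {x : g}
    (h : AlgPowB br X j x) : ∀ j', j ≤ j' → AlgPowB br X j' x := by
  intro j' hj
  induction j' with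
  | zero => exact absurd hj (by have := h.one_le; omega)
  | succ n ih =>
    rcases Nat.lt_or_ge j (n + 1) with h1 | h2
    · have hn : AlgPowB br X n x := ih (by omega)
      have := AlgPowB.add hn (AlgPowB.base h0)
      simpa using this
    · have : j = n + 1 := by omega
      subst this; exact h

lemma br_span {K : Type*} [Field K] {g : Type*} [AddCommGroup g] [Module K g]
    {br : g →ₗ[K] g →ₗ[K] g} {X : Set g} {a b : ℕ} {x y : g}
    (hx : x ∈ Submodule.span K {z | AlgPowB br X a z})
    (hy : y ∈ Submodule.span K {z | AlgPowB br X b z}) :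
    br x y ∈ Submodule.span K {z | AlgPowB br X (a + b) z} := by
  induction hx using Submodule.span_induction with
  | mem x hx =>
    induction hy using Submodule.span_induction with
    | mem y hy => exact Submodule.subset_span (AlgPowB.node hx hy)
    | zero => simpa using zero_mem _
    | add y1 y2 _ _ h1 h2 => simpa using add_mem h1 h2
    | smul c y _ h => simpa using Submodule.smul_mem _ c h
  | zero => simpa using zero_mem _
  | add x1 x2 _ _ h1 h2 => simpa [map_add] using add_mem h1 h2
  | smul c x _ h => simpa using Submodule.smul_mem _ c h

theorem span_stabilizes {K : Type*} [Field K] {g : Type*} [AddCommGroup g]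
    [Module K g] (br : g →ₗ[K] g →ₗ[K] g) (X : Set g)
    (hfin : X.Finite) (h0 : (0 : g) ∈ X) (hsym : X = -X)
    (k : ℕ) (hk : 1 ≤ k)
    (hstab : ∀ j, k ≤ j → j ≤ 2 * k →
      Submodule.span K {z | AlgPowB br X j z} = Submodule.span K {z | AlgPowB br X k z}) :
    ∀ k', k ≤ k' →
      Submodule.span K {z | AlgPowB br X k' z} = Submodule.span K {z | AlgPowB br X k z} := by
  intro k'
  induction k' using Nat.strong_induction_on with
  | _ k' ih =>
    intro hkk'
    rcases le_or_gt k' (2 * k) with hle | hgt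
    · exact hstab k' hkk' hle
    · apply le_antisymm
      · rw [Submodule.span_le]
        intro z hz
        simp only [Set.mem_setOf_eq] at hz
        have key : ∀ {a : ℕ} {x : g}, AlgPowB br X a x → a < k' →
            x ∈ Submodule.span K {z | AlgPowB br X k z} := by
          intro a x hx ha
          have hx' : AlgPowB br X (max a k) x := hx.pad h0 _ (le_max_left _ _)
          have := ih (max a k) (by omega) (le_max_right _ _)
          rw [← this]
          exact Submodule.subset_span hx'
        cases hz with
        | base hx => omega
        | @add a b x y hx hy =>
          have hb := hy.one_le
          have ha := hx.one_le
          exact add_mem (key hx (by omega)) (key hy (by omega))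
        | @node a b x y hx hy =>
          have hb := hy.one_le
          have ha := hx.one_le
          have h1 := key hx (by omega)
          have h2 := key hy (by omega)
          have := br_span h1 h2
          rwa [show k + k = 2 * k by ring, hstab (2 * k) (by omega) le_rfl] at this
      · rw [Submodule.span_le]
        intro z hz
        exact Submodule.subset_span (AlgPowB.pad h0 hz _ hkk')
end

section
/- Let 𝔤 be a Lie algebra over a field K and let z ∈ 𝔤 be extremal, i.e., [[y,z],z] = λ_z(y)·z for all y ∈ 𝔤, where λ_z : 𝔤 → K. Then for all x, y ∈ 𝔤: 2[[x,z],[y,z]] = λ_z(x)[y,z] − λ_z(y)[x,z] + λ_z([x,y])·z. -/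
theorem extremal_bracket_identity {K : Type*} [Field K] {L : Type*}
    [LieRing L] [LieAlgebra K L] (z : L) (lam : L → K)
    (hext : ∀ y : L, ⁅⁅y, z⁆, z⁆ = lam y • z) (x y : L) :
    (2 : K) • ⁅⁅x, z⁆, ⁅y, z⁆⁆ =
      lam x • ⁅y, z⁆ - lam y • ⁅x, z⁆ + lam ⁅x, y⁆ • z := by
  have hA : ⁅⁅x, z⁆, ⁅y, z⁆⁆ = ⁅⁅⁅x, z⁆, y⁆, z⁆ + lam x • ⁅y, z⁆ := by
    rw [leibniz_lie, hext x, lie_smul]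
  have hB : ⁅⁅y, z⁆, ⁅x, z⁆⁆ = ⁅⁅⁅y, z⁆, x⁆, z⁆ + lam y • ⁅x, z⁆ := by
    rw [leibniz_lie, hext y, lie_smul]
  have h2 : ⁅⁅x, z⁆, y⁆ = ⁅⁅x, y⁆, z⁆ + ⁅⁅y, z⁆, x⁆ := by
    rw [← lie_skew ⁅x, z⁆ y, leibniz_lie, neg_add, ← neg_lie, lie_skew, lie_skew]
  have hskew : ⁅⁅y, z⁆, ⁅x, z⁆⁆ = -⁅⁅x, z⁆, ⁅y, z⁆⁆ := by
    rw [← lie_skew]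
  rw [h2, add_lie, hext ⁅x, y⁆] at hA
  rw [hskew] at hB
  have hC : ⁅⁅⁅y, z⁆, x⁆, z⁆ = -⁅⁅x, z⁆, ⁅y, z⁆⁆ - lam y • ⁅x, z⁆ := by
    rw [eq_sub_iff_add_eq, ← hB]
  rw [hC] at hA
  rw [two_smul]
  nth_rewrite 1 [hA]
  abel
end

section
/- Let 𝔤 be a Lie algebra over a field K with char(K) ≠ 2, and let x, y ∈ 𝔤 be extremal elements with associated linear functionals λ_x, λ_y. Then x + [x,y] + (1/2)λ_y(x)·y is extremal. -/
theorem extremal_of_extremal_pair {K : Type*} [Field K] {L : Type*}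
    [LieRing L] [LieAlgebra K L] (hchar : (2 : K) ≠ 0)
    (x y : L) (lamx lamy : L → K)
    (hx : ∀ w : L, ⁅⁅w, x⁆, x⁆ = lamx w • x)
    (hy : ∀ w : L, ⁅⁅w, y⁆, y⁆ = lamy w • y) :
    ∀ w : L, ∃ c : K,
      ⁅⁅w, x + ⁅x, y⁆ + ((2 : K)⁻¹ * lamy x) • y⁆, x + ⁅x, y⁆ + ((2 : K)⁻¹ * lamy x) • y⁆ =
        c • (x + ⁅x, y⁆ + ((2 : K)⁻¹ * lamy x) • y) := by
  intro w
  -- the exponential exp(-ad y) as a plain function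
  set φ : L → L := fun a => a + ⁅a, y⁆ + (2:K)⁻¹ • ⁅⁅a, y⁆, y⁆ with hφ
  have hφdef : ∀ a, φ a = a + ⁅a, y⁆ + (2:K)⁻¹ • ⁅⁅a, y⁆, y⁆ := fun a => rfl
  -- Premet-type identity
  have hP : ∀ a b : L, (2:K) • ⁅⁅a,y⁆,⁅b,y⁆⁆
      = lamy ⁅a,b⁆ • y + lamy a • ⁅b,y⁆ - lamy b • ⁅a,y⁆ := by
    intro a b
    have h1 := hy ⁅a,b⁆
    rw [lie_lie a b y, sub_lie, lie_lie a ⁅b,y⁆ y, lie_lie b ⁅a,y⁆ y, hy b, hy a] at h1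
    simp only [lie_smul] at h1
    rw [← lie_skew ⁅b,y⁆ ⁅a,y⁆] at h1
    rw [two_smul]
    linear_combination (norm := module) h1
  have h2 : (2:K)⁻¹ * 2 = 1 := inv_mul_cancel₀ hchar
  -- φ is a Lie algebra endomorphism
  have hom : ∀ a b : L, ⁅φ a, φ b⁆ = φ ⁅a,b⁆ := by
    intro a b
    have hPab := hP a b
    simp only [hφdef]
    rw [hy a, hy b, hy ⁅a,b⁆, lie_lie a b y]
    simp only [add_lie, lie_add, smul_lie, lie_smul, hy a, hy b, lie_self, smul_zero,
      sub_lie, lie_sub]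
    rw [← lie_skew y ⁅b,y⁆, hy b, ← lie_skew y b, ← lie_skew b ⁅a,y⁆]
    have h3 : (2:K)⁻¹ • ((2:K) • ⁅⁅a,y⁆,⁅b,y⁆⁆)
        = (2:K)⁻¹ • (lamy ⁅a,b⁆ • y + lamy a • ⁅b,y⁆ - lamy b • ⁅a,y⁆) := by rw [hPab]
    rw [smul_smul, h2, one_smul] at h3
    linear_combination (norm := module) h3
  -- φ ∘ ψ = id where ψ = exp(ad y)
  have hψ : ∀ v : L, φ (v - ⁅v,y⁆ + (2:K)⁻¹ • ⁅⁅v,y⁆,y⁆) = v := by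
    intro v
    simp only [hφdef]
    rw [hy v]
    simp only [sub_lie, add_lie, smul_lie, lie_smul, hy v, lie_self, smul_zero, lie_sub,
      sub_zero, add_zero, smul_sub, smul_add]
    have h3 : ((2:K)⁻¹ + (2:K)⁻¹) = 1 := by
      rw [← two_mul, mul_inv_cancel₀ hchar]
    linear_combination (norm := module) (congrArg (fun t : K => t • (lamy v • y)) h3)
  -- φ commutes with scalars
  have hsmul : ∀ (t : K) (a : L), φ (t • a) = t • φ a := by
    intro t a
    simp only [hφdef, smul_lie, lie_smul, smul_add, smul_comm t]
  -- the element in question is φ x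
  have hφx : φ x = x + ⁅x,y⁆ + ((2:K)⁻¹ * lamy x) • y := by
    rw [hφdef, hy x, smul_smul]
  set v : L := w - ⁅w,y⁆ + (2:K)⁻¹ • ⁅⁅w,y⁆,y⁆ with hv
  refine ⟨lamx v, ?_⟩
  calc ⁅⁅w, x + ⁅x, y⁆ + ((2 : K)⁻¹ * lamy x) • y⁆, x + ⁅x, y⁆ + ((2 : K)⁻¹ * lamy x) • y⁆
      = ⁅⁅φ v, φ x⁆, φ x⁆ := by rw [hφx, hψ w]
    _ = φ ⁅⁅v, x⁆, x⁆ := by rw [hom, hom]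
    _ = lamx v • φ x := by rw [hx v, hsmul]
    _ = lamx v • (x + ⁅x, y⁆ + ((2 : K)⁻¹ * lamy x) • y) := by rw [hφx]
end

section
/- Let 𝔤 be a Lie algebra over a field K. For any x ∈ 𝔤, any symmetric subset Y ⊆ 𝔤, and any k ≥ 1, the set 𝒮_{≤k}(x,Y) is contained in the K-linear span of 𝒯_{≤k}(x,Y). (That is, every Lie algebra is turrifiable.) -/
/-- Pure bracket expressions of length `k` in elements of `Y` (the set `Y^{[k]}`). -/
inductive BrkPow {L : Type*} [LieRing L] (Y : Set L) : ℕ → L → Prop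
  | base {y : L} : y ∈ Y → BrkPow Y 1 y
  | node {j k : ℕ} {a b : L} : BrkPow Y j a → BrkPow Y k b → BrkPow Y (j + k) ⁅a, b⁆

/-- Towers of height `k` over `Y` (the set `𝒯_k(Y)`). -/
def Tow {L : Type*} [LieRing L] (Y : Set L) : ℕ → Set L
  | 0 => {0}
  | 1 => Y
  | (k + 2) =>
      Set.image2 (fun a b => ⁅a, b⁆) (Tow Y (k + 1)) Y ∪
        Set.image2 (fun a b => ⁅a, b⁆) Y (Tow Y (k + 1))

/-- `𝒮_k(x,Y)`: bracket expressions of length `k` with one marked entry `x`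
and all other entries in `Y`. -/
inductive SMark {L : Type*} [LieRing L] (x : L) (Y : Set L) : ℕ → L → Prop
  | base : SMark x Y 1 x
  | left {j k : ℕ} {a b : L} : SMark x Y j a → BrkPow Y k b → SMark x Y (j + k) ⁅a, b⁆
  | right {j k : ℕ} {a b : L} : BrkPow Y j a → SMark x Y k b → SMark x Y (j + k) ⁅a, b⁆

/-- `𝒯_k(x,Y)`: towers of height `k` with one marked entry `x`. -/
def TMark {L : Type*} [LieRing L] (x : L) (Y : Set L) : ℕ → Set L
  | 0 => {0}
  | 1 => {x}
  | (k + 2) =>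
      Set.image2 (fun a b => ⁅a, b⁆) (TMark x Y (k + 1)) Y ∪
        Set.image2 (fun a b => ⁅a, b⁆) Y (TMark x Y (k + 1)) ∪
        Set.image2 (fun a b => ⁅a, b⁆) (Tow Y (k + 1)) {x} ∪
        Set.image2 (fun a b => ⁅a, b⁆) {x} (Tow Y (k + 1))


section Aux

open Submodule

variable {K : Type*} [Field K] {L : Type*} [LieRing L] [LieAlgebra K L]

private lemma lieSpanLeft {S : Set L} {N : Submodule K L} (b : L)
    (h : ∀ a ∈ S, ⁅a, b⁆ ∈ N) : ∀ a ∈ span K S, ⁅a, b⁆ ∈ N := by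
  intro a ha
  induction ha using Submodule.span_induction with
  | mem a ha => exact h a ha
  | zero => simpa using N.zero_mem
  | add u v _ _ ihu ihv => simpa [add_lie] using N.add_mem ihu ihv
  | smul c u _ ihu => simpa [smul_lie] using N.smul_mem c ihu

private lemma lieSpanRight {S : Set L} {N : Submodule K L} (b : L)
    (h : ∀ a ∈ S, ⁅b, a⁆ ∈ N) : ∀ a ∈ span K S, ⁅b, a⁆ ∈ N := by
  intro a ha
  induction ha using Submodule.span_induction with
  | mem a ha => exact h a ha
  | zero => simpa using N.zero_mem
  | add u v _ _ ihu ihv => simpa [lie_add] using N.add_mem ihu ihv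
  | smul c u _ ihu => simpa [lie_smul] using N.smul_mem c ihu

private lemma spanCast (Y : Set L) {m n : ℕ} (h : m = n) {a : L}
    (ha : a ∈ span K (Tow Y m)) : a ∈ span K (Tow Y n) := h ▸ ha

private lemma spanCastM (x : L) (Y : Set L) {m n : ℕ} (h : m = n) {a : L}
    (ha : a ∈ span K (TMark x Y m)) : a ∈ span K (TMark x Y n) := h ▸ ha

private lemma tow_lie_y (Y : Set L) (p : ℕ) {s y : L} (hs : s ∈ Tow Y p) (hy : y ∈ Y) :
    ⁅s, y⁆ ∈ span K (Tow Y (p + 1)) := by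
  match p with
  | 0 =>
    obtain rfl : s = 0 := hs
    simp
  | p + 1 =>
    exact subset_span (Or.inl ⟨s, hs, y, hy, rfl⟩)

private lemma y_lie_tow (Y : Set L) (p : ℕ) {s y : L} (hs : s ∈ Tow Y p) (hy : y ∈ Y) :
    ⁅y, s⁆ ∈ span K (Tow Y (p + 1)) := by
  match p with
  | 0 =>
    obtain rfl : s = 0 := hs
    simp
  | p + 1 =>
    exact subset_span (Or.inr ⟨y, hy, s, hs, rfl⟩)

private lemma tmark_lie_y (x : L) (Y : Set L) (p : ℕ) {s y : L}
    (hs : s ∈ TMark x Y p) (hy : y ∈ Y) : ⁅s, y⁆ ∈ span K (TMark x Y (p + 1)) := by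
  match p with
  | 0 =>
    obtain rfl : s = 0 := hs
    simp
  | p + 1 =>
    exact subset_span (Or.inl (Or.inl (Or.inl ⟨s, hs, y, hy, rfl⟩)))

private lemma y_lie_tmark (x : L) (Y : Set L) (p : ℕ) {s y : L}
    (hs : s ∈ TMark x Y p) (hy : y ∈ Y) : ⁅y, s⁆ ∈ span K (TMark x Y (p + 1)) := by
  match p with
  | 0 =>
    obtain rfl : s = 0 := hs
    simp
  | p + 1 =>
    exact subset_span (Or.inl (Or.inl (Or.inr ⟨y, hy, s, hs, rfl⟩)))

/-- Key pure lemma: bracketing a span of towers with a tower lands in the span of towers. -/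
private lemma pure_pure (Y : Set L) :
    ∀ q p : ℕ, ∀ t ∈ Tow Y q, ∀ a ∈ span K (Tow Y p),
      ⁅a, t⁆ ∈ span K (Tow Y (p + q)) ∧ ⁅t, a⁆ ∈ span K (Tow Y (p + q)) := by
  intro q
  induction q using Nat.strong_induction_on with
  | _ q IH =>
    match q with
    | 0 =>
      intro p t ht a ha
      obtain rfl : t = 0 := ht
      simp
    | 1 =>
      intro p t ht a ha
      refine ⟨?_, ?_⟩
      · exact lieSpanLeft t (fun s hs => tow_lie_y Y p hs ht) a ha
      · exact lieSpanRight t (fun s hs => y_lie_tow Y p hs ht) a ha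
    | (q + 2) =>
      intro p t ht a ha
      simp only [Tow, Set.mem_union, Set.mem_image2] at ht
      rcases ht with ⟨t', ht', y, hy, rfl⟩ | ⟨y, hy, t', ht', rfl⟩
      · constructor
        · -- ⁅a, ⁅t', y⁆⁆ = ⁅⁅a, t'⁆, y⁆ + ⁅t', ⁅a, y⁆⁆
          rw [leibniz_lie]
          refine add_mem ?_ ?_
          · have h1 : ⁅a, t'⁆ ∈ span K (Tow Y (p + (q + 1))) :=
              (IH (q + 1) (by omega) p t' ht' a ha).1
            exact lieSpanLeft y (fun s hs => tow_lie_y Y _ hs hy) _ h1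
          · have h1 : ⁅a, y⁆ ∈ span K (Tow Y (p + 1)) :=
              lieSpanLeft y (fun s hs => tow_lie_y Y p hs hy) a ha
            have h2 := (IH (q + 1) (by omega) (p + 1) t' ht' _ h1).2
            exact spanCast Y (by omega) h2
        · -- ⁅⁅t', y⁆, a⁆ = ⁅t', ⁅y, a⁆⁆ - ⁅y, ⁅t', a⁆⁆
          rw [lie_lie]
          refine sub_mem ?_ ?_
          · have h1 : ⁅y, a⁆ ∈ span K (Tow Y (p + 1)) :=
              lieSpanRight y (fun s hs => y_lie_tow Y p hs hy) a ha
            have h2 := (IH (q + 1) (by omega) (p + 1) t' ht' _ h1).2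
            exact spanCast Y (by omega) h2
          · have h1 : ⁅t', a⁆ ∈ span K (Tow Y (p + (q + 1))) :=
              (IH (q + 1) (by omega) p t' ht' a ha).2
            exact lieSpanRight y (fun s hs => y_lie_tow Y _ hs hy) _ h1
      · constructor
        · -- ⁅a, ⁅y, t'⁆⁆ = ⁅⁅a, y⁆, t'⁆ + ⁅y, ⁅a, t'⁆⁆
          rw [leibniz_lie]
          refine add_mem ?_ ?_
          · have h1 : ⁅a, y⁆ ∈ span K (Tow Y (p + 1)) :=
              lieSpanLeft y (fun s hs => tow_lie_y Y p hs hy) a ha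
            have h2 := (IH (q + 1) (by omega) (p + 1) t' ht' _ h1).1
            exact spanCast Y (by omega) h2
          · have h1 : ⁅a, t'⁆ ∈ span K (Tow Y (p + (q + 1))) :=
              (IH (q + 1) (by omega) p t' ht' a ha).1
            exact lieSpanRight y (fun s hs => y_lie_tow Y _ hs hy) _ h1
        · -- ⁅⁅y, t'⁆, a⁆ = ⁅y, ⁅t', a⁆⁆ - ⁅t', ⁅y, a⁆⁆
          rw [lie_lie]
          refine sub_mem ?_ ?_
          · have h1 : ⁅t', a⁆ ∈ span K (Tow Y (p + (q + 1))) :=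
              (IH (q + 1) (by omega) p t' ht' a ha).2
            exact lieSpanRight y (fun s hs => y_lie_tow Y _ hs hy) _ h1
          · have h1 : ⁅y, a⁆ ∈ span K (Tow Y (p + 1)) :=
              lieSpanRight y (fun s hs => y_lie_tow Y p hs hy) a ha
            have h2 := (IH (q + 1) (by omega) (p + 1) t' ht' _ h1).2
            exact spanCast Y (by omega) h2

/-- Key marked lemma: bracketing a span of marked towers with a pure tower lands in the
span of marked towers. -/
private lemma mark_pure (x : L) (Y : Set L) :
    ∀ q p : ℕ, ∀ t ∈ Tow Y q, ∀ a ∈ span K (TMark x Y p),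
      ⁅a, t⁆ ∈ span K (TMark x Y (p + q)) ∧ ⁅t, a⁆ ∈ span K (TMark x Y (p + q)) := by
  intro q
  induction q using Nat.strong_induction_on with
  | _ q IH =>
    match q with
    | 0 =>
      intro p t ht a ha
      obtain rfl : t = 0 := ht
      simp
    | 1 =>
      intro p t ht a ha
      refine ⟨?_, ?_⟩
      · exact lieSpanLeft t (fun s hs => tmark_lie_y x Y p hs ht) a ha
      · exact lieSpanRight t (fun s hs => y_lie_tmark x Y p hs ht) a ha
    | (q + 2) =>
      intro p t ht a ha
      simp only [Tow, Set.mem_union, Set.mem_image2] at ht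
      rcases ht with ⟨t', ht', y, hy, rfl⟩ | ⟨y, hy, t', ht', rfl⟩
      · constructor
        · rw [leibniz_lie]
          refine add_mem ?_ ?_
          · have h1 : ⁅a, t'⁆ ∈ span K (TMark x Y (p + (q + 1))) :=
              (IH (q + 1) (by omega) p t' ht' a ha).1
            exact lieSpanLeft y (fun s hs => tmark_lie_y x Y _ hs hy) _ h1
          · have h1 : ⁅a, y⁆ ∈ span K (TMark x Y (p + 1)) :=
              lieSpanLeft y (fun s hs => tmark_lie_y x Y p hs hy) a ha
            have h2 := (IH (q + 1) (by omega) (p + 1) t' ht' _ h1).2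
            exact spanCastM x Y (by omega) h2
        · rw [lie_lie]
          refine sub_mem ?_ ?_
          · have h1 : ⁅y, a⁆ ∈ span K (TMark x Y (p + 1)) :=
              lieSpanRight y (fun s hs => y_lie_tmark x Y p hs hy) a ha
            have h2 := (IH (q + 1) (by omega) (p + 1) t' ht' _ h1).2
            exact spanCastM x Y (by omega) h2
          · have h1 : ⁅t', a⁆ ∈ span K (TMark x Y (p + (q + 1))) :=
              (IH (q + 1) (by omega) p t' ht' a ha).2
            exact lieSpanRight y (fun s hs => y_lie_tmark x Y _ hs hy) _ h1
      · constructor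
        · rw [leibniz_lie]
          refine add_mem ?_ ?_
          · have h1 : ⁅a, y⁆ ∈ span K (TMark x Y (p + 1)) :=
              lieSpanLeft y (fun s hs => tmark_lie_y x Y p hs hy) a ha
            have h2 := (IH (q + 1) (by omega) (p + 1) t' ht' _ h1).1
            exact spanCastM x Y (by omega) h2
          · have h1 : ⁅a, t'⁆ ∈ span K (TMark x Y (p + (q + 1))) :=
              (IH (q + 1) (by omega) p t' ht' a ha).1
            exact lieSpanRight y (fun s hs => y_lie_tmark x Y _ hs hy) _ h1
        · rw [lie_lie]
          refine sub_mem ?_ ?_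
          · have h1 : ⁅t', a⁆ ∈ span K (TMark x Y (p + (q + 1))) :=
              (IH (q + 1) (by omega) p t' ht' a ha).2
            exact lieSpanRight y (fun s hs => y_lie_tmark x Y _ hs hy) _ h1
          · have h1 : ⁅y, a⁆ ∈ span K (TMark x Y (p + 1)) :=
              lieSpanRight y (fun s hs => y_lie_tmark x Y p hs hy) a ha
            have h2 := (IH (q + 1) (by omega) (p + 1) t' ht' _ h1).2
            exact spanCastM x Y (by omega) h2

private lemma brk_span (Y : Set L) {j : ℕ} {a : L} (h : BrkPow Y j a) :
    a ∈ span K (Tow Y j) := by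
  induction h with
  | base hy => exact subset_span hy
  | node ha hb iha ihb =>
    exact lieSpanRight _ (fun t ht => (pure_pure Y _ _ t ht _ iha).1) _ ihb

private lemma smark_span (x : L) (Y : Set L) {j : ℕ} {z : L} (h : SMark x Y j z) :
    z ∈ span K (TMark x Y j) := by
  induction h with
  | base => exact subset_span rfl
  | left ha hb iha =>
    exact lieSpanRight _ (fun t ht => (mark_pure x Y _ _ t ht _ iha).1) _ (brk_span Y hb)
  | right ha hb ihb =>
    exact spanCastM x Y (Nat.add_comm _ _)
      (lieSpanLeft _ (fun t ht => (mark_pure x Y _ _ t ht _ ihb).2) _ (brk_span Y ha))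

end Aux

/-- Lie algebras are turrifiable: `𝒮_{≤k}(x,Y) ⊆ span_K(𝒯_{≤k}(x,Y))`. -/
theorem lieAlgebra_turrifiable {K : Type*} [Field K] {L : Type*}
    [LieRing L] [LieAlgebra K L] (x : L) (Y : Set L)
    (hfin : Y.Finite) (h0 : (0 : L) ∈ Y) (hsym : Y = -Y) (k : ℕ) (hk : 1 ≤ k) :
    ({0} ∪ {z | ∃ j ≤ k, SMark x Y j z}) ⊆
      (Submodule.span K (⋃ j ∈ Set.Iic k, TMark x Y j) : Set L) := by
  rintro z (hz | ⟨j, hj, hs⟩)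
  · obtain rfl : z = 0 := hz
    exact Submodule.zero_mem _
  · refine Submodule.span_mono ?_ (smark_span x Y hs)
    exact Set.subset_biUnion_of_mem (show j ∈ Set.Iic k from hj)
end

section
/- In any Mal'cev algebra 𝔤 over a field K with char(K) ≠ 2, the identity [[[a,b],c],d] + [[[b,c],d],a] + [[[c,d],a],b] + [[[d,a],b],c] + [[a,c],[d,b]] = 0 holds for all a, b, c, d ∈ 𝔤. -/
theorem malcev_four_variable_identity {K : Type*} [Field K] {g : Type*}
    [AddCommGroup g] [Module K g] (hchar : (2 : K) ≠ 0)
    (br : g →ₗ[K] g →ₗ[K] g)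
    (hanti : ∀ x y : g, br x y = -br y x)
    (hmalcev : ∀ x y z : g,
      br (br x y) (br x z) =
        br (br (br x y) z) x + br (br (br y z) x) x + br (br (br z x) x) y) :
    ∀ a b c d : g,
      br (br (br a b) c) d + br (br (br b c) d) a + br (br (br c d) a) b +
          br (br (br d a) b) c + br (br a c) (br d b) = 0 := by
  have half : ∀ x : g, x + x = 0 → x = 0 := by
    intro x hx
    have h2 : (2 : K) • x = 0 := by
      rw [two_smul]; exact hx
    rcases smul_eq_zero.mp h2 with h | h
    · exact absurd h hchar
    · exact h
  intro a b c d
  have H1 := hmalcev (a + b) c d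
  have H2 := hmalcev a c d
  have H3 := hmalcev b c d
  have H4 := hmalcev (a + c) d b
  have H5 := hmalcev a d b
  have H6 := hmalcev c d b
  have H7 := hmalcev (a + d) b c
  have H8 := hmalcev a b c
  have H9 := hmalcev d b c
  apply half
  simp only [map_add, LinearMap.add_apply, hanti b a, hanti c a, hanti d a, hanti c b,
    hanti d b, hanti d c,
    hanti (br a c) (br a b), hanti (br a d) (br a b), hanti (br b c) (br a b),
    hanti (br b d) (br a b), hanti (br c d) (br a b), hanti (br a d) (br a c),
    hanti (br b c) (br a c), hanti (br b d) (br a c), hanti (br c d) (br a c),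
    hanti (br b c) (br a d), hanti (br b d) (br a d), hanti (br c d) (br a d),
    hanti (br b d) (br b c), hanti (br c d) (br b c), hanti (br c d) (br b d),
    map_neg, LinearMap.neg_apply, neg_neg] at H1 H2 H3 H4 H5 H6 H7 H8 H9 ⊢
  linear_combination (norm := abel) -H1 + H2 + H3 + H4 - H5 - H6 - H7 + H8 + H9
end

section
/- Let 𝔤 be a finite-dimensional algebra over a field K with bilinear bracket (not necessarily associative), and let A ⊆ 𝔤 be a symmetric set generating 𝔤 as an algebra. Then for every d ≥ 1 with d ≤ dim(𝔤), the set A^{[≤ 2^{d−1}]} of pure bracket expressions of length at most 2^{d−1} in elements of A spans a K-vector subspace of dimension at least d. -/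
/-- `z ∈ X^{[k]}`: pure bracket expressions of length `k`. -/
inductive BrkPowB {K : Type*} [Field K] {g : Type*} [AddCommGroup g] [Module K g]
    (br : g →ₗ[K] g →ₗ[K] g) (X : Set g) : ℕ → g → Prop
  | base {x : g} : x ∈ X → BrkPowB br X 1 x
  | node {j k : ℕ} {a b : g} : BrkPowB br X j a → BrkPowB br X k b →
      BrkPowB br X (j + k) (br a b)

/-- Towers of height `k` over `Y` (the set `𝒯_k(Y)`). -/
def TowB {K : Type*} [Field K] {g : Type*} [AddCommGroup g] [Module K g]
    (br : g →ₗ[K] g →ₗ[K] g) (Y : Set g) : ℕ → Set g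
  | 0 => {0}
  | 1 => Y
  | (k + 2) =>
      Set.image2 (fun a b => br a b) (TowB br Y (k + 1)) Y ∪
        Set.image2 (fun a b => br a b) Y (TowB br Y (k + 1))

/-- `𝒮_k(x,Y)`: bracket expressions of length `k` with one marked entry `x`. -/
inductive SMarkB {K : Type*} [Field K] {g : Type*} [AddCommGroup g] [Module K g]
    (br : g →ₗ[K] g →ₗ[K] g) (x : g) (Y : Set g) : ℕ → g → Prop
  | base : SMarkB br x Y 1 x
  | left {j k : ℕ} {a b : g} : SMarkB br x Y j a → BrkPowB br Y k b →
      SMarkB br x Y (j + k) (br a b)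
  | right {j k : ℕ} {a b : g} : BrkPowB br Y j a → SMarkB br x Y k b →
      SMarkB br x Y (j + k) (br a b)

/-- `𝒯_k(x,Y)`: towers of height `k` with one marked entry `x`. -/
def TMarkB {K : Type*} [Field K] {g : Type*} [AddCommGroup g] [Module K g]
    (br : g →ₗ[K] g →ₗ[K] g) (x : g) (Y : Set g) : ℕ → Set g
  | 0 => {0}
  | 1 => {x}
  | (k + 2) =>
      Set.image2 (fun a b => br a b) (TMarkB br x Y (k + 1)) Y ∪
        Set.image2 (fun a b => br a b) Y (TMarkB br x Y (k + 1)) ∪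
        Set.image2 (fun a b => br a b) (TowB br Y (k + 1)) {x} ∪
        Set.image2 (fun a b => br a b) {x} (TowB br Y (k + 1))

section Aux
variable {K : Type*} [Field K] {g : Type*} [AddCommGroup g] [Module K g]
  (br : g →ₗ[K] g →ₗ[K] g) (A : Set g)

def SsetB (k : ℕ) : Set g := {0} ∪ {z | ∃ j ≤ k, BrkPowB br A j z}

def VsubB (k : ℕ) : Submodule K g := Submodule.span K (SsetB br A k)

lemma ssetB_mono {k k' : ℕ} (h : k ≤ k') : SsetB br A k ⊆ SsetB br A k' := by
  rintro z (hz | ⟨j, hj, hb⟩)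
  · exact Or.inl hz
  · exact Or.inr ⟨j, hj.trans h, hb⟩

lemma vsubB_mono {k k' : ℕ} (h : k ≤ k') : VsubB br A k ≤ VsubB br A k' :=
  Submodule.span_mono (ssetB_mono br A h)

lemma br_span_s15 {S T : Set g} {p : Submodule K g}
    (h : ∀ x ∈ S, ∀ y ∈ T, br x y ∈ p)
    {x y : g} (hx : x ∈ Submodule.span K S) (hy : y ∈ Submodule.span K T) :
    br x y ∈ p := by
  have h1 : ∀ x' ∈ S, br x' y ∈ p := by
    intro x' hx'
    have hle : Submodule.span K T ≤ p.comap (br x') :=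
      Submodule.span_le.2 (fun t ht => by simpa using h x' hx' t ht)
    simpa using hle hy
  have h2 : x ∈ p.comap (br.flip y) :=
    Submodule.span_le.2 (fun s hs => by simpa using h1 s hs) hx
  simpa using h2

lemma ssetB_br {k : ℕ} {x y : g} (hx : x ∈ SsetB br A k) (hy : y ∈ SsetB br A k) :
    br x y ∈ SsetB br A (2 * k) := by
  rcases hx with hx | ⟨j, hj, hbx⟩
  · simp only [Set.mem_singleton_iff] at hx
    subst hx
    exact Or.inl (by simp)
  rcases hy with hy | ⟨j', hj', hby⟩
  · simp only [Set.mem_singleton_iff] at hy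
    subst hy
    exact Or.inl (by simp)
  · exact Or.inr ⟨j + j', by omega, BrkPowB.node hbx hby⟩

lemma vsubB_br {k : ℕ} {x y : g} (hx : x ∈ VsubB br A k) (hy : y ∈ VsubB br A k) :
    br x y ∈ VsubB br A (2 * k) :=
  br_span_s15 br (fun x' hx' y' hy' => Submodule.subset_span (ssetB_br br A hx' hy')) hx hy

lemma vsubB_top_of_eq {k : ℕ} (hk : 1 ≤ k)
    (hgen : ∀ z : g, ∃ m : ℕ, AlgPowB br A m z)
    (h : VsubB br A (2 * k) = VsubB br A k) : VsubB br A k = ⊤ := by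
  rw [eq_top_iff]
  suffices h' : ∀ z m, AlgPowB br A m z → z ∈ VsubB br A k by
    intro z _
    obtain ⟨m, hm⟩ := hgen z
    exact h' z m hm
  intro z m hm
  induction hm with
  | base ha => exact Submodule.subset_span (Or.inr ⟨1, hk, BrkPowB.base ha⟩)
  | add _ _ ih1 ih2 => exact Submodule.add_mem _ ih1 ih2
  | node _ _ ih1 ih2 => exact h ▸ vsubB_br br A ih1 ih2

end Aux

/-- Escape: the pure bracket expressions of length at most `2^(d-1)` over a
generating symmetric set span a subspace of dimension at least `d`. -/
theorem brkPow_span_dim {K : Type*} [Field K] {g : Type*} [AddCommGroup g]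
    [Module K g] [FiniteDimensional K g] (br : g →ₗ[K] g →ₗ[K] g)
    (A : Set g) (hfin : A.Finite) (h0 : (0 : g) ∈ A) (hsym : A = -A)
    (hgen : ∀ z : g, ∃ k : ℕ, AlgPowB br A k z)
    (d : ℕ) (hd1 : 1 ≤ d) (hdD : d ≤ Module.finrank K g) :
    d ≤ Module.finrank K
        (Submodule.span K ({0} ∪ {z | ∃ j ≤ 2 ^ (d - 1), BrkPowB br A j z})) := by
  -- A contains a nonzero element
  have hA : ∃ a ∈ A, a ≠ 0 := by
    by_contra hcon
    push_neg at hcon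
    have hz : ∀ z : g, ∀ m : ℕ, AlgPowB br A m z → z = 0 := by
      intro z m hm
      induction hm with
      | base ha => exact hcon _ ha
      | add _ _ ih1 ih2 => simp [ih1, ih2]
      | node _ _ ih1 ih2 => simp [ih1, ih2]
    have hsub : Subsingleton g := ⟨fun a b => by
      obtain ⟨m, hm⟩ := hgen a
      obtain ⟨m', hm'⟩ := hgen b
      rw [hz a m hm, hz b m' hm']⟩
    have : Module.finrank K g = 0 := Module.finrank_zero_of_subsingleton
    omega
  obtain ⟨a, haA, ha0⟩ := hA
  have key : ∀ n : ℕ, n + 1 ≤ Module.finrank K g →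
      n + 1 ≤ Module.finrank K (VsubB br A (2 ^ n)) := by
    intro n
    induction n with
    | zero =>
      intro _
      have hmem : a ∈ VsubB br A (2 ^ 0) :=
        Submodule.subset_span (Or.inr ⟨1, le_refl 1, BrkPowB.base haA⟩)
      have : Nontrivial (VsubB br A (2 ^ 0)) :=
        ⟨⟨a, hmem⟩, 0, by simpa [Subtype.ext_iff] using ha0⟩
      have hpos := Module.finrank_pos (R := K) (M := VsubB br A (2 ^ 0))
      omega
    | succ n ih =>
      intro hn
      by_cases heq : VsubB br A (2 ^ (n + 1)) = VsubB br A (2 ^ n)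
      · have h2 : (2 : ℕ) ^ (n + 1) = 2 * 2 ^ n := by ring
        have htop : VsubB br A (2 ^ n) = ⊤ :=
          vsubB_top_of_eq br A Nat.one_le_two_pow hgen (h2 ▸ heq)
        have : Module.finrank K (VsubB br A (2 ^ (n + 1))) = Module.finrank K g := by
          rw [heq, htop]; exact finrank_top K g
        omega
      · have hle : VsubB br A (2 ^ n) ≤ VsubB br A (2 ^ (n + 1)) :=
          vsubB_mono br A (Nat.pow_le_pow_right (by norm_num) (by omega))
        have hlt : VsubB br A (2 ^ n) < VsubB br A (2 ^ (n + 1)) :=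
          lt_of_le_of_ne hle (Ne.symm heq)
        have h1 := Submodule.finrank_lt_finrank_of_lt hlt
        have h2 := ih (by omega)
        omega
  have hkey := key (d - 1) (by omega)
  have hd : d - 1 + 1 = d := by omega
  rw [hd] at hkey
  exact hkey
end
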